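/- Under the LATE assumptions plus outcome monotonicity, the share of the group G=cn (compliers who are outcome never-takers: D1>D0, Y0=Y1=0) is identified by Pr(G=cn) = E[D(1−Y) | Z=1] − E[D(1−Y) | Z=0]. -/

import Mathlib

open MeasureTheory ProbabilityTheory

/-- Conditional mean of `f` given event `s`. -/
noncomputable def cmean {Ω : Type} [MeasurableSpace Ω] (μ : Measure Ω)
    (f : Ω → ℝ) (s : Set Ω) : ℝ :=
  (∫ ω in s, f ω ∂μ) / (μ s).toReal

/-!
Conditioning on `Z = z` replaces the treatment by `D_z`, and on treated units the outcome is `Y1`,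
so `E[D(1-Y) | Z = z] = E[D_z (1-Y1) | Z = z]`, which by independence of the instrument equals
`E[D_z (1-Y1)]`. Under treatment monotonicity `(D1 - D0)(1 - Y1)` is the indicator of compliers
with `Y1 = 0`, and under outcome monotonicity those are a.e. exactly the compliers with
`Y0 = Y1 = 0`.
-/

section

variable {Ω : Type} [MeasurableSpace Ω] {μ : Measure Ω}

theorem cmean_congr {f g : Ω → ℝ} {s : Set Ω} (hs : MeasurableSet s) (hfg : Set.EqOn f g s) :
    cmean μ f s = cmean μ g s := by
  rw [cmean, cmean, setIntegral_congr_fun hs hfg]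

theorem cmean_preimage_eq_integral_of_indepFun [IsFiniteMeasure μ] {β : Type*}
    [MeasurableSpace β] {W : Ω → ℝ} {Z : Ω → β} (hWZ : IndepFun W Z μ) (hW : AEMeasurable W μ)
    (hZ : Measurable Z) {t : Set β} (ht : MeasurableSet t) (hμt : μ (Z ⁻¹' t) ≠ 0) :
    cmean μ W (Z ⁻¹' t) = ∫ ω, W ω ∂μ := by
  have hindep := (IndepFun_iff_Indep Z W μ).1 hWZ.symm
  have hμt' : μ.real (Z ⁻¹' t) ≠ 0 := ENNReal.toReal_ne_zero.2 ⟨hμt, measure_ne_top μ _⟩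
  have hint : ∫ ω in Z ⁻¹' t, W ω ∂μ = μ.real (Z ⁻¹' t) * ∫ ω, W ω ∂μ :=
    hindep.setIntegral_eq_mul (f := id) hZ.comap_le hW ⟨t, ht, rfl⟩ aestronglyMeasurable_id
  rw [cmean, hint]
  exact mul_div_cancel_left₀ _ hμt'

theorem integrable_mul_one_sub_of_binary [IsFiniteMeasure μ] {D Y : Ω → ℝ} (hDm : Measurable D)
    (hYm : Measurable Y) (hDbin : ∀ ω, D ω = 0 ∨ D ω = 1) (hYbin : ∀ ω, Y ω = 0 ∨ Y ω = 1) :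
    Integrable (fun ω => D ω * (1 - Y ω)) μ := by
  refine .of_bound (hDm.mul (measurable_const.sub hYm)).aestronglyMeasurable 1 (.of_forall ?_)
  intro ω
  rcases hDbin ω with h | h <;> rcases hYbin ω with h' | h' <;> simp [h, h']

theorem mul_one_sub_mix_of_binary {d a b : ℝ} (hd : d = 0 ∨ d = 1) :
    d * (1 - (d * a + (1 - d) * b)) = d * (1 - a) := by
  rcases hd with rfl | rfl <;> ring

theorem sub_mul_one_sub_eq_ite_of_binary {d0 d1 y : ℝ} (hd0 : d0 = 0 ∨ d0 = 1)
    (hd1 : d1 = 0 ∨ d1 = 1) (hy : y = 0 ∨ y = 1) (hle : d0 ≤ d1) :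
    d1 * (1 - y) - d0 * (1 - y) = if d0 < d1 ∧ y = 0 then 1 else 0 := by
  rcases hd0 with rfl | rfl <;> rcases hd1 with rfl | rfl <;> rcases hy with rfl | rfl <;>
    norm_num at hle <;> norm_num

theorem cmean_mul_one_sub_eq_integral [IsFiniteMeasure μ] {Z D Dz Y Y0 Y1 : Ω → ℝ} {z : ℝ}
    (hZm : Measurable Z) (hDzm : Measurable Dz) (hY1m : Measurable Y1)
    (hDz : ∀ ω, Z ω = z → D ω = Dz ω) (hDzbin : ∀ ω, Dz ω = 0 ∨ Dz ω = 1)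
    (hY : ∀ ω, Y ω = D ω * Y1 ω + (1 - D ω) * Y0 ω)
    (hindep : IndepFun (fun ω => Dz ω * (1 - Y1 ω)) Z μ) (hμz : μ {ω | Z ω = z} ≠ 0) :
    cmean μ (fun ω => D ω * (1 - Y ω)) {ω | Z ω = z} = ∫ ω, Dz ω * (1 - Y1 ω) ∂μ := by
  have hon : Set.EqOn (fun ω => D ω * (1 - Y ω)) (fun ω => Dz ω * (1 - Y1 ω))
      {ω | Z ω = z} := fun ω hω => by
    dsimp only
    rw [hY, hDz ω hω]
    exact mul_one_sub_mix_of_binary (hDzbin ω)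
  rw [cmean_congr (measurableSet_eq_fun hZm measurable_const) hon]
  exact cmean_preimage_eq_integral_of_indepFun hindep
    (hDzm.mul (measurable_const.sub hY1m)).aemeasurable hZm (measurableSet_singleton z) hμz

theorem integral_sub_mul_one_sub_eq_measureReal [IsFiniteMeasure μ] {D0 D1 Y1 : Ω → ℝ}
    (hD0m : Measurable D0) (hD1m : Measurable D1) (hY1m : Measurable Y1)
    (hD0bin : ∀ ω, D0 ω = 0 ∨ D0 ω = 1) (hD1bin : ∀ ω, D1 ω = 0 ∨ D1 ω = 1)
    (hY1bin : ∀ ω, Y1 ω = 0 ∨ Y1 ω = 1) (hmono : ∀ᵐ ω ∂μ, D0 ω ≤ D1 ω) :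
    ∫ ω, D1 ω * (1 - Y1 ω) ∂μ - ∫ ω, D0 ω * (1 - Y1 ω) ∂μ
      = μ.real {ω | D0 ω < D1 ω ∧ Y1 ω = 0} := by
  have hS : MeasurableSet {ω | D0 ω < D1 ω ∧ Y1 ω = 0} :=
    (measurableSet_lt hD0m hD1m).inter (hY1m (measurableSet_singleton 0))
  have hsub : (fun ω => D1 ω * (1 - Y1 ω) - D0 ω * (1 - Y1 ω))
      =ᵐ[μ] {ω | D0 ω < D1 ω ∧ Y1 ω = 0}.indicator 1 := by
    filter_upwards [hmono] with ω hle
    rw [sub_mul_one_sub_eq_ite_of_binary (hD0bin ω) (hD1bin ω) (hY1bin ω) hle]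
    simp [Set.indicator_apply]
  rw [← integral_sub (integrable_mul_one_sub_of_binary hD1m hY1m hD1bin hY1bin)
    (integrable_mul_one_sub_of_binary hD0m hY1m hD0bin hY1bin), integral_congr_ae hsub,
    integral_indicator_one hS]

theorem setOf_and_eq_zero_and_eq_zero_ae_eq {p : Ω → Prop} {Y0 Y1 : Ω → ℝ}
    (hY0bin : ∀ ω, Y0 ω = 0 ∨ Y0 ω = 1) (hmono : ∀ᵐ ω ∂μ, Y0 ω ≤ Y1 ω) :
    {ω | p ω ∧ Y0 ω = 0 ∧ Y1 ω = 0} =ᵐ[μ] {ω | p ω ∧ Y1 ω = 0} := by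
  refine Filter.eventuallyEq_set.2 ?_
  filter_upwards [hmono] with ω hle
  have hY0 : Y1 ω = 0 → Y0 ω = 0 := fun hY1 => by
    rcases hY0bin ω with h | h
    · exact h
    · linarith
  show (p ω ∧ Y0 ω = 0 ∧ Y1 ω = 0) ↔ (p ω ∧ Y1 ω = 0)
  tauto

end

theorem cn_group_share_general
{Ω : Type} [MeasurableSpace Ω] (μ : Measure Ω) [IsProbabilityMeasure μ]
    (Z D0 D1 Y0 Y1 D Y : Ω → ℝ)
    (hZm : Measurable Z) (hD0m : Measurable D0) (hD1m : Measurable D1)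
    (hY1m : Measurable Y1)
    (hZbin : ∀ ω, Z ω = 0 ∨ Z ω = 1)
    (hD0bin : ∀ ω, D0 ω = 0 ∨ D0 ω = 1)
    (hD1bin : ∀ ω, D1 ω = 0 ∨ D1 ω = 1)
    (hY0bin : ∀ ω, Y0 ω = 0 ∨ Y0 ω = 1)
    (hY1bin : ∀ ω, Y1 ω = 0 ∨ Y1 ω = 1)
    (hD : ∀ ω, D ω = Z ω * D1 ω + (1 - Z ω) * D0 ω)
    (hY : ∀ ω, Y ω = D ω * Y1 ω + (1 - D ω) * Y0 ω)
    (hz0 : 0 < μ {ω | Z ω = 1}) (hz1 : μ {ω | Z ω = 1} < 1)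
    (hmonoD : ∀ᵐ ω ∂μ, D0 ω ≤ D1 ω)
    (hmonoY : ∀ᵐ ω ∂μ, Y0 ω ≤ Y1 ω)
    (hindep : IndepFun (fun ω => (Y0 ω, Y1 ω, D0 ω, D1 ω)) Z μ) :
    (μ {ω | D0 ω < D1 ω ∧ Y0 ω = 0 ∧ Y1 ω = 0}).toReal
      = cmean μ (fun ω => D ω * (1 - Y ω)) {ω | Z ω = 1}
        - cmean μ (fun ω => D ω * (1 - Y ω)) {ω | Z ω = 0} := by
  have hZ0 : {ω | Z ω = 0} = {ω | Z ω = 1}ᶜ := by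
    ext ω
    rcases hZbin ω with h | h <;> simp [h]
  have hμZ0 : μ {ω | Z ω = 0} ≠ 0 := by
    rw [hZ0, prob_compl_eq_one_sub (measurableSet_eq_fun hZm measurable_const)]
    exact (tsub_pos_of_lt hz1).ne'
  have hmean1 := cmean_mul_one_sub_eq_integral hZm hD1m hY1m
    (fun ω h => by rw [hD, h]; ring) hD1bin hY
    (hindep.comp (φ := fun p : ℝ × ℝ × ℝ × ℝ => p.2.2.2 * (1 - p.2.1)) (by fun_prop)
      measurable_id) hz0.ne'
  have hmean0 := cmean_mul_one_sub_eq_integral hZm hD0m hY1m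
    (fun ω h => by rw [hD, h]; ring) hD0bin hY
    (hindep.comp (φ := fun p : ℝ × ℝ × ℝ × ℝ => p.2.2.1 * (1 - p.2.1)) (by fun_prop)
      measurable_id) hμZ0
  rw [hmean1, hmean0, integral_sub_mul_one_sub_eq_measureReal hD0m hD1m hY1m hD0bin hD1bin
    hY1bin hmonoD, measure_congr (setOf_and_eq_zero_and_eq_zero_ae_eq hY0bin hmonoY)]
  rfl

theorem cn_group_share
{Ω : Type} [MeasurableSpace Ω] (μ : Measure Ω) [IsProbabilityMeasure μ]
    (Z D0 D1 Y0 Y1 D Y : Ω → ℝ)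
    (hZm : Measurable Z) (hD0m : Measurable D0) (hD1m : Measurable D1)
    (hY0m : Measurable Y0) (hY1m : Measurable Y1)
    (hZbin : ∀ ω, Z ω = 0 ∨ Z ω = 1)
    (hD0bin : ∀ ω, D0 ω = 0 ∨ D0 ω = 1)
    (hD1bin : ∀ ω, D1 ω = 0 ∨ D1 ω = 1)
    (hY0bin : ∀ ω, Y0 ω = 0 ∨ Y0 ω = 1)
    (hY1bin : ∀ ω, Y1 ω = 0 ∨ Y1 ω = 1)
    (hD : ∀ ω, D ω = Z ω * D1 ω + (1 - Z ω) * D0 ω)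
    (hY : ∀ ω, Y ω = D ω * Y1 ω + (1 - D ω) * Y0 ω)
    (hz0 : 0 < μ {ω | Z ω = 1}) (hz1 : μ {ω | Z ω = 1} < 1)
    (hmonoD : ∀ᵐ ω ∂μ, D0 ω ≤ D1 ω)
    (hmonoY : ∀ᵐ ω ∂μ, Y0 ω ≤ Y1 ω)
    (hindep : IndepFun (fun ω => (Y0 ω, Y1 ω, D0 ω, D1 ω)) Z μ) :
    (μ {ω | D0 ω < D1 ω ∧ Y0 ω = 0 ∧ Y1 ω = 0}).toReal
      = cmean μ (fun ω => D ω * (1 - Y ω)) {ω | Z ω = 1}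
        - cmean μ (fun ω => D ω * (1 - Y ω)) {ω | Z ω = 0} :=
  cn_group_share_general μ Z D0 D1 Y0 Y1 D Y hZm hD0m hD1m hY1m hZbin hD0bin hD1bin hY0bin hY1bin hD
    hY hz0 hz1 hmonoD hmonoY hindep
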